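/- Suppose E[g₀(X)²] < ∞, E[Y²] < ∞, 0 < Var(g₀(X)), 0 < Var(Y), E[Z(g₀)Z(g₀)ᵀ] is invertible, β_{0,3} = 0 (the population interaction coefficient vanishes), Var(Y | T=0) = Var(Y | T=1), and E[Y | T=1] = E[Y | T=0]. Then the ratio of the asymptotic variance of the regression-adjusted estimator to that of the difference-in-means estimator satisfies σ² / [Var(Y|T=0)/(1−p) + Var(Y|T=1)/p] = 1 − Corr(Y, g₀(X))², where Corr denotes the Pearson correlation coefficient. (The relative-efficiency calculation stated after the Corollary.) -/

import Mathlib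

open MeasureTheory ProbabilityTheory Filter Matrix
open scoped ENNReal NNReal Topology

noncomputable section

/-- The regression vector `Z(g) = (1, t, g(x), t·g(x))ᵀ` evaluated at `(x, t)`. -/
def Zvec {d : ℕ} (g : (Fin d → ℝ) → ℝ) (x : Fin d → ℝ) (t : ℝ) : Fin 4 → ℝ :=
  ![1, t, g x, t * g x]

/-- The outer product `Z(g) Z(g)ᵀ`. -/
def Zouter {d : ℕ} (g : (Fin d → ℝ) → ℝ) (x : Fin d → ℝ) (t : ℝ) :
    Matrix (Fin 4) (Fin 4) ℝ :=
  vecMulVec (Zvec g x t) (Zvec g x t)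

/-- Euclidean norm of a vector in `ℝ^m`. -/
def vecNorm {m : ℕ} (v : Fin m → ℝ) : ℝ := Real.sqrt (∑ i, v i ^ 2)

/-- The `ℓ² → ℓ²` operator norm of a square matrix. -/
def opNorm {m : ℕ} (M : Matrix (Fin m) (Fin m) ℝ) : ℝ :=
  ‖Matrix.toEuclideanCLM (𝕜 := ℝ) M‖

/-- The minimum eigenvalue of a (symmetric) matrix, via the Rayleigh quotient. -/
def lambdaMin {m : ℕ} (M : Matrix (Fin m) (Fin m) ℝ) : ℝ :=
  sInf {r | ∃ v : Fin m → ℝ, ∑ i, v i ^ 2 = 1 ∧ r = v ⬝ᵥ (M *ᵥ v)}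

variable {Ω : Type*} [MeasurableSpace Ω]

/-- Population Gram matrix `P[Z(g)Z(g)ᵀ]` (entrywise integral). -/
def popGram {d : ℕ} (μ : Measure Ω) (X : Ω → Fin d → ℝ) (T : Ω → ℝ)
    (g : (Fin d → ℝ) → ℝ) : Matrix (Fin 4) (Fin 4) ℝ :=
  Matrix.of fun i j => ∫ ω, Zvec g (X ω) (T ω) i * Zvec g (X ω) (T ω) j ∂μ

/-- Population cross moment `P[Z(g)·Y]` (entrywise integral). -/
def popZY {d : ℕ} (μ : Measure Ω) (Y : Ω → ℝ) (X : Ω → Fin d → ℝ) (T : Ω → ℝ)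
    (g : (Fin d → ℝ) → ℝ) : Fin 4 → ℝ :=
  fun i => ∫ ω, Zvec g (X ω) (T ω) i * Y ω ∂μ

/-- The population OLS coefficient `β(g) = (P[Z(g)Z(g)ᵀ])⁻¹ P[Z(g)Y]`. -/
def betaPop {d : ℕ} (μ : Measure Ω) (Y : Ω → ℝ) (X : Ω → Fin d → ℝ) (T : Ω → ℝ)
    (g : (Fin d → ℝ) → ℝ) : Fin 4 → ℝ :=
  (popGram μ X T g)⁻¹ *ᵥ popZY μ Y X T g

/-- The average treatment effect `α₁ = E[Y | T = 1] − E[Y | T = 0]`. -/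
def ATE (μ : Measure Ω) (Y : Ω → ℝ) (T : Ω → ℝ) : ℝ :=
  (∫ ω, Y ω ∂μ[|{ω | T ω = 1}]) - (∫ ω, Y ω ∂μ[|{ω | T ω = 0}])

/-- The asymptotic variance
`σ² = σ²_{Y_C}/(1−p) + σ²_{Y_T}/p − (σ²_g/(p(1−p)))·[β₂ p + (β₂+β₃)(1−p)]²`. -/
def sigmaSq {d : ℕ} (μ : Measure Ω) (Y : Ω → ℝ) (X : Ω → Fin d → ℝ) (T : Ω → ℝ)
    (g₀ : (Fin d → ℝ) → ℝ) (p : ℝ) : ℝ :=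
  variance Y (μ[|{ω | T ω = 0}]) / (1 - p) + variance Y (μ[|{ω | T ω = 1}]) / p
    - variance (fun ω => g₀ (X ω)) μ / (p * (1 - p)) *
      (betaPop μ Y X T g₀ 2 * p
        + (betaPop μ Y X T g₀ 2 + betaPop μ Y X T g₀ 3) * (1 - p)) ^ 2

/-- Covariance `Cov(f, g) = E[(f − E f)(g − E g)]`. -/
def covar {Ω : Type*} [MeasurableSpace Ω] (μ : Measure Ω) (f g : Ω → ℝ) : ℝ :=
  ∫ ω, (f ω - ∫ ω', f ω' ∂μ) * (g ω - ∫ ω', g ω' ∂μ) ∂μ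

/-- Pearson correlation `Corr(f, g) = Cov(f,g)/(√Var f · √Var g)`. -/
def corr {Ω : Type*} [MeasurableSpace Ω] (μ : Measure Ω) (f g : Ω → ℝ) : ℝ :=
  covar μ f g / (Real.sqrt (variance f μ) * Real.sqrt (variance g μ))

/-!
With no interaction term, the normal equations for the regressors `1` and `g₀(X)` give
`Cov(Y, g₀(X)) = β₀₂ · Var(g₀(X))`, since independence of `T` and `X` makes `g₀(X)` uncorrelated
with `T`. Equal conditional means and variances collapse the law of total variance over
`{T = 1}, {T = 0}` to `Var Y = v`, the common conditional variance. Hence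
`σ² = (v − Var(g₀(X)) β₀₂²) / (p(1 − p))` while the denominator is `v / (p(1 − p))`, and the ratio
is `1 − Var(g₀(X)) β₀₂² / v = 1 − Cov(Y, g₀(X))² / (Var Y · Var g₀(X))`.
-/

section ConditioningOnAnEvent

variable {Ω : Type*} [MeasurableSpace Ω] {μ : Measure Ω} {s : Set Ω}

lemma integral_cond_eq_inv_mul_setIntegral (μ : Measure Ω) (s : Set Ω) (f : Ω → ℝ) :
    ∫ ω, f ω ∂μ[|s] = (μ.real s)⁻¹ * ∫ ω in s, f ω ∂μ := by
  rw [ProbabilityTheory.cond, integral_smul_measure, ENNReal.toReal_inv, smul_eq_mul,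
    measureReal_def]

lemma MeasureTheory.MemLp.cond {Y : Ω → ℝ} {q : ℝ≥0∞} (hY : MemLp Y q μ) (hs : μ s ≠ 0) :
    MemLp Y q (μ[|s]) :=
  (hY.restrict s).smul_measure (ENNReal.inv_ne_top.mpr hs)

lemma variance_cond_eq_setIntegral [IsFiniteMeasure μ] {Y : Ω → ℝ} (hY : MemLp Y 2 μ)
    (hs : μ s ≠ 0) :
    Var[Y; μ[|s]] = (μ.real s)⁻¹ * ∫ ω in s, Y ω ^ 2 ∂μ
      - ((μ.real s)⁻¹ * ∫ ω in s, Y ω ∂μ) ^ 2 := by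
  have := cond_isProbabilityMeasure (μ := μ) hs
  rw [variance_eq_sub (hY.cond hs), integral_cond_eq_inv_mul_setIntegral,
    integral_cond_eq_inv_mul_setIntegral]
  rfl

lemma variance_eq_add_variance_cond_compl [IsProbabilityMeasure μ] {Y : Ω → ℝ}
    (hY : MemLp Y 2 μ) (hs : MeasurableSet s) (hs0 : μ s ≠ 0) (hsc0 : μ sᶜ ≠ 0) :
    Var[Y; μ] = μ.real s * Var[Y; μ[|s]] + μ.real sᶜ * Var[Y; μ[|sᶜ]]
      + μ.real s * μ.real sᶜ * ((μ[|s])[Y] - (μ[|sᶜ])[Y]) ^ 2 := by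
  have hsum : μ.real s + μ.real sᶜ = 1 := probReal_add_probReal_compl hs
  have hq : μ.real s ≠ 0 := by simpa [measureReal_def, ENNReal.toReal_eq_zero_iff] using hs0
  have hr : μ.real sᶜ ≠ 0 := by simpa [measureReal_def, ENNReal.toReal_eq_zero_iff] using hsc0
  have hY2 : ∫ ω, Y ω ^ 2 ∂μ = ∫ ω in s, Y ω ^ 2 ∂μ + ∫ ω in sᶜ, Y ω ^ 2 ∂μ :=
    (integral_add_compl hs hY.integrable_sq).symm
  have hY1 : ∫ ω, Y ω ∂μ = ∫ ω in s, Y ω ∂μ + ∫ ω in sᶜ, Y ω ∂μ :=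
    (integral_add_compl hs (hY.integrable one_le_two)).symm
  rw [variance_cond_eq_setIntegral hY hs0, variance_cond_eq_setIntegral hY hsc0,
    variance_eq_sub hY, integral_cond_eq_inv_mul_setIntegral,
    integral_cond_eq_inv_mul_setIntegral]
  change ∫ ω, Y ω ^ 2 ∂μ - (∫ ω, Y ω ∂μ) ^ 2 = _
  rw [hY2, hY1]
  field_simp
  linear_combination
    -((∫ ω in s, Y ω ∂μ) ^ 2 * μ.real sᶜ + (∫ ω in sᶜ, Y ω ∂μ) ^ 2 * μ.real s) * hsum

end ConditioningOnAnEvent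

lemma corr_sq_eq_covariance_sq_div {Ω : Type*} [MeasurableSpace Ω] (μ : Measure Ω)
    (f g : Ω → ℝ) :
    corr μ f g ^ 2 = cov[f, g; μ] ^ 2 / (Var[f; μ] * Var[g; μ]) := by
  rw [corr, div_pow, mul_pow, Real.sq_sqrt (variance_nonneg _ _),
    Real.sq_sqrt (variance_nonneg _ _)]
  rfl

section Regression

variable {Ω : Type*} [MeasurableSpace Ω] {d : ℕ} {μ : Measure Ω} {Y : Ω → ℝ}
  {X : Ω → Fin d → ℝ} {T : Ω → ℝ} {g : (Fin d → ℝ) → ℝ}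

lemma popGram_mulVec_betaPop (h : IsUnit (popGram μ X T g)) :
    popGram μ X T g *ᵥ betaPop μ Y X T g = popZY μ Y X T g := by
  rw [betaPop, mulVec_mulVec, mul_nonsing_inv _ ((isUnit_iff_isUnit_det _).mp h), one_mulVec]

lemma covariance_eq_variance_mul_betaPop_two [IsProbabilityMeasure μ]
    (hg : MemLp (fun ω => g (X ω)) 2 μ) (hY : MemLp Y 2 μ) (hGram : IsUnit (popGram μ X T g))
    (hβ₃ : betaPop μ Y X T g 3 = 0)
    (hgT : ∫ ω, g (X ω) * T ω ∂μ = (∫ ω, g (X ω) ∂μ) * ∫ ω, T ω ∂μ) :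
    cov[Y, fun ω => g (X ω); μ] = Var[fun ω => g (X ω); μ] * betaPop μ Y X T g 2 := by
  have hrow₀ := congrFun (popGram_mulVec_betaPop (Y := Y) hGram) 0
  have hrow₂ := congrFun (popGram_mulVec_betaPop (Y := Y) hGram) 2
  -- The normal equations for the regressors `1` and `g(X)`; subtracting `E[g(X)]` times the
  -- first from the second eliminates the intercept, and `hgT` eliminates the `T`-coefficient.
  simp only [mulVec, dotProduct, Fin.sum_univ_four, popGram, popZY, of_apply, Zvec,
    cons_val_zero, cons_val_one, cons_val_two, cons_val_three, head_cons, tail_cons,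
    hβ₃, one_mul, mul_one, mul_zero, add_zero, integral_const, probReal_univ, one_smul]
    at hrow₀ hrow₂
  rw [covariance_eq_sub hY hg, variance_eq_sub hg]
  simp only [Pi.mul_apply, Pi.pow_apply, mul_comm (Y _), sq]
  linear_combination (∫ ω, g (X ω) ∂μ) * hrow₀ - hrow₂ + betaPop μ Y X T g 1 * hgT

end Regression

theorem mlrate_relative_efficiency_general {Ω : Type*} [MeasurableSpace Ω] {d : ℕ}
    (μ : Measure Ω) [IsProbabilityMeasure μ]
    (Y : Ω → ℝ) (X : Ω → Fin d → ℝ) (T : Ω → ℝ)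
    (hT : Measurable T)
    (hTbin : ∀ ω, T ω = 0 ∨ T ω = 1)
    (p : ℝ) (hp0 : 0 < p) (hp1 : p < 1)
    (hp : μ {ω | T ω = 1} = ENNReal.ofReal p)
    (hTX : IndepFun T X μ)
    (g₀ : (Fin d → ℝ) → ℝ) (hg₀ : Measurable g₀)
    (hg₀L2 : MemLp (fun ω => g₀ (X ω)) 2 μ)
    (hYL2 : MemLp Y 2 μ)
    (hvarY : 0 < variance Y μ)
    (hGram : IsUnit (popGram μ X T g₀))
    (hbeta3 : betaPop μ Y X T g₀ 3 = 0)
    (hvarEq : variance Y (μ[|{ω | T ω = 0}]) = variance Y (μ[|{ω | T ω = 1}]))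
    (hmeanEq : (∫ ω, Y ω ∂μ[|{ω | T ω = 1}]) = ∫ ω, Y ω ∂μ[|{ω | T ω = 0}]) :
    sigmaSq μ Y X T g₀ p /
        (variance Y (μ[|{ω | T ω = 0}]) / (1 - p)
          + variance Y (μ[|{ω | T ω = 1}]) / p)
      = 1 - corr μ Y (fun ω => g₀ (X ω)) ^ 2 := by
  set A := {ω | T ω = 1}
  have hA : MeasurableSet A := hT (measurableSet_singleton 1)
  have hAc : {ω | T ω = 0} = Aᶜ := by
    ext ω; rcases hTbin ω with h | h <;> simp [A, h]
  have hμA : μ.real A = p := by rw [measureReal_def, hp, ENNReal.toReal_ofReal hp0.le]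
  have hμAc : μ.real Aᶜ = 1 - p := by rw [probReal_compl_eq_one_sub hA, hμA]
  have hA0 : μ A ≠ 0 := by simpa [hp] using hp0
  have hAc0 : μ Aᶜ ≠ 0 := fun h => by simp [measureReal_def, h] at hμAc; linarith
  unfold sigmaSq
  rw [hAc] at hvarEq hmeanEq ⊢
  have hvarY_eq : Var[Y; μ] = Var[Y; μ[|Aᶜ]] := by
    rw [variance_eq_add_variance_cond_compl hYL2 hA hA0 hAc0, hμA, hμAc, ← hvarEq]
    change _ + _ * (∫ ω, Y ω ∂μ[|A] - ∫ ω, Y ω ∂μ[|Aᶜ]) ^ 2 = _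
    rw [hmeanEq]
    ring
  have hcov := covariance_eq_variance_mul_betaPop_two hg₀L2 hYL2 hGram hbeta3
    ((hTX.comp measurable_id hg₀).symm.integral_fun_mul_eq_mul_integral
      hg₀L2.aestronglyMeasurable hT.aestronglyMeasurable)
  rw [corr_sq_eq_covariance_sq_div, hcov, hvarY_eq, ← hvarEq, hbeta3]
  rw [hvarY_eq] at hvarY
  have hq : 1 - p ≠ 0 := sub_ne_zero.mpr hp1.ne'
  field_simp
  ring

/-- **Relative efficiency.** If the population interaction coefficient vanishes
(`β₀₃ = 0`), the conditional variances of `Y` in test and control coincide, and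
`E[Y|T=1] = E[Y|T=0]`, then the ratio of the asymptotic variance `σ²` of the
regression-adjusted estimator to that of the difference-in-means estimator is
`1 − Corr(Y, g₀(X))²`. -/
theorem mlrate_relative_efficiency {Ω : Type*} [MeasurableSpace Ω] {d : ℕ}
    (μ : Measure Ω) [IsProbabilityMeasure μ]
    (Y : Ω → ℝ) (X : Ω → Fin d → ℝ) (T : Ω → ℝ)
    (hY : Measurable Y) (hX : Measurable X) (hT : Measurable T)
    (hTbin : ∀ ω, T ω = 0 ∨ T ω = 1)
    (p : ℝ) (hp0 : 0 < p) (hp1 : p < 1)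
    (hp : μ {ω | T ω = 1} = ENNReal.ofReal p)
    (hTX : IndepFun T X μ)
    (g₀ : (Fin d → ℝ) → ℝ) (hg₀ : Measurable g₀)
    (hg₀L2 : MemLp (fun ω => g₀ (X ω)) 2 μ)
    (hYL2 : MemLp Y 2 μ)
    (hvarg : 0 < variance (fun ω => g₀ (X ω)) μ)
    (hvarY : 0 < variance Y μ)
    (hGram : IsUnit (popGram μ X T g₀))
    (hbeta3 : betaPop μ Y X T g₀ 3 = 0)
    (hvarEq : variance Y (μ[|{ω | T ω = 0}]) = variance Y (μ[|{ω | T ω = 1}]))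
    (hmeanEq : (∫ ω, Y ω ∂μ[|{ω | T ω = 1}]) = ∫ ω, Y ω ∂μ[|{ω | T ω = 0}]) :
    sigmaSq μ Y X T g₀ p /
        (variance Y (μ[|{ω | T ω = 0}]) / (1 - p)
          + variance Y (μ[|{ω | T ω = 1}]) / p)
      = 1 - corr μ Y (fun ω => g₀ (X ω)) ^ 2 :=
  mlrate_relative_efficiency_general μ Y X T hT hTbin p hp0 hp1 hp hTX g₀ hg₀ hg₀L2 hYL2 hvarY hGram
    hbeta3 hvarEq hmeanEq
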